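/- arXiv:2604.07845 — 4 statements merged into one kernel-verified Lean document; each statement's English description precedes it below -/
import Mathlib

section
/- Let A be a nonnegative self-adjoint operator on a Hilbert space H with semigroup T_t = e^{-tA}, and let ν be a measure on (0,∞) with ∫₀^∞ s dν(s) < ∞. Then for every f in the form domain D(√A), ∫₀^∞ ⟨f - T_s f, f⟩ dν(s) ≤ ‖√A f‖² · ∫₀^∞ s dν(s). -/
/-!
Here `A` is multiplication by `a ≥ 0` on `L²(μ)`, so `⟨f - T_s f, f⟩ = ∫ (1 - e^{-s a}) f² dμ`.
Pointwise `0 ≤ 1 - e^{-x} ≤ x` for `x ≥ 0`, hence `0 ≤ ⟨f - T_s f, f⟩ ≤ s ∫ a f² dμ` for every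
`s > 0`; integrating this against `ν` gives the claim.
-/

open MeasureTheory Real

lemma sub_exp_neg_mul_mul_self_nonneg {t : ℝ} (ht : 0 ≤ t) (y : ℝ) :
    0 ≤ (y - exp (-t) * y) * y := by
  have : exp (-t) ≤ 1 := exp_le_one_iff.mpr (neg_nonpos.mpr ht)
  nlinarith [sq_nonneg y]

lemma sub_exp_neg_mul_mul_self_le (t y : ℝ) : (y - exp (-t) * y) * y ≤ t * y ^ 2 := by
  have := one_sub_le_exp_neg t
  nlinarith [sq_nonneg y]

section SemigroupForm

variable {Ω : Type*} [MeasurableSpace Ω] {μ : Measure Ω} {a f : Ω → ℝ}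

lemma integrable_mul_sq_of_memLp_sqrt_mul (ha : ∀ ω, 0 ≤ a ω)
    (hform : MemLp (fun ω => √(a ω) * f ω) 2 μ) : Integrable (fun ω => a ω * f ω ^ 2) μ :=
  hform.integrable_sq.congr (.of_forall fun ω => by simp only [mul_pow, sq_sqrt (ha ω)])

lemma integral_semigroup_form_nonneg (ha : ∀ ω, 0 ≤ a ω) {s : ℝ} (hs : 0 ≤ s) :
    0 ≤ ∫ ω, (f ω - exp (-(s * a ω)) * f ω) * f ω ∂μ :=
  integral_nonneg fun ω => sub_exp_neg_mul_mul_self_nonneg (mul_nonneg hs (ha ω)) (f ω)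

lemma integral_semigroup_form_le_mul (ha : ∀ ω, 0 ≤ a ω)
    (hint : Integrable (fun ω => a ω * f ω ^ 2) μ) {s : ℝ} (hs : 0 ≤ s) :
    ∫ ω, (f ω - exp (-(s * a ω)) * f ω) * f ω ∂μ ≤ s * ∫ ω, a ω * f ω ^ 2 ∂μ := by
  rw [← integral_const_mul]
  refine integral_mono_of_nonneg
    (.of_forall fun ω => sub_exp_neg_mul_mul_self_nonneg (mul_nonneg hs (ha ω)) (f ω))
    (hint.const_mul s) (.of_forall fun ω => ?_)
  simpa only [mul_assoc] using sub_exp_neg_mul_mul_self_le (s * a ω) (f ω)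

end SemigroupForm

theorem integral_semigroup_form_le_general
    (Ω : Type) [MeasurableSpace Ω] (μ : Measure Ω) (a f : Ω → ℝ)
    (ha : ∀ ω, 0 ≤ a ω)
    (hform : MemLp (fun ω => Real.sqrt (a ω) * f ω) 2 μ)
    (ν : Measure ℝ) (hνpos : ∀ᵐ s ∂ν, 0 < s)
    (hνint : Integrable (fun s : ℝ => s) ν) :
    ∫ s, (∫ ω, (f ω - Real.exp (-(s * a ω)) * f ω) * f ω ∂μ) ∂ν ≤
      (∫ ω, a ω * f ω ^ 2 ∂μ) * ∫ s, s ∂ν := by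
  have hint := integrable_mul_sq_of_memLp_sqrt_mul ha hform
  calc ∫ s, (∫ ω, (f ω - exp (-(s * a ω)) * f ω) * f ω ∂μ) ∂ν
      ≤ ∫ s, s * ∫ ω, a ω * f ω ^ 2 ∂μ ∂ν :=
        integral_mono_of_nonneg
          (hνpos.mono fun s hs => integral_semigroup_form_nonneg ha hs.le)
          (hνint.mul_const _)
          (hνpos.mono fun s hs => integral_semigroup_form_le_mul ha hint hs.le)
    _ = (∫ ω, a ω * f ω ^ 2 ∂μ) * ∫ s, s ∂ν := by rw [integral_mul_const, mul_comm]

/-- Let `A` be a nonnegative self-adjoint operator (realized spectrally as multiplication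
by a nonnegative function `a` on `L²(μ)`) with semigroup `T_s = e^{-sA}`, and `ν` a measure
on `(0,∞)` with `∫ s dν < ∞`. Then for `f` in the form domain,
`∫₀^∞ ⟨f - T_s f, f⟩ dν(s) ≤ ‖√A f‖² ∫₀^∞ s dν(s)`. -/
theorem integral_semigroup_form_le
    (Ω : Type) [MeasurableSpace Ω] (μ : Measure Ω) (a f : Ω → ℝ)
    (hameas : Measurable a) (ha : ∀ ω, 0 ≤ a ω)
    (hf : MemLp f 2 μ)
    (hform : MemLp (fun ω => Real.sqrt (a ω) * f ω) 2 μ)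
    (ν : Measure ℝ) (hνpos : ∀ᵐ s ∂ν, 0 < s)
    (hνint : Integrable (fun s : ℝ => s) ν) :
    ∫ s, (∫ ω, (f ω - Real.exp (-(s * a ω)) * f ω) * f ω ∂μ) ∂ν ≤
      (∫ ω, a ω * f ω ^ 2 ∂μ) * ∫ s, s ∂ν :=
  integral_semigroup_form_le_general Ω μ a f ha hform ν hνpos hνint
end

section
/- Let A be a nonnegative self-adjoint operator on a Hilbert space H and Φ(λ) = bλ + ∫₀^∞ (1-e^{-λs}) dν(s) a Bernstein function. Then for every f in the form domain D(√A), f also lies in the form domain D(√Φ(A)), and ⟨Φ(A)f, f⟩ = b⟨Af, f⟩ + ∫₀^∞ ⟨f - e^{-sA}f, f⟩ dν(s), where Φ(A) is defined by the spectral functional calculus and the quadratic forms are interpreted via ‖√A f‖² and ‖√Φ(A) f‖². -/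
/-!
Realize `A` as multiplication by `a` and weight `μ` by `f²`; this turns every quadratic form in
the statement into an integral against the finite measure `f² μ`, whose pushforward along `a` is
the spectral measure of `f`. The Lévy integral then splits off from `Φ(a)` by Fubini on
`f² μ ⊗ ν`: the integrand `1 - e^{-a s}` is nonnegative and bounded by `(1 + a) min(1, s)`, which
is integrable because `a` is (that is, `f` lies in the form domain of `A`) and because
`∫ min(1, s) dν < ∞`. Since `ν` lives on `s > 0`, that last condition also makes `ν` s-finite, as
Fubini requires.
-/

open MeasureTheory
open scoped NNReal ENNReal

theorem sFinite_of_lintegral_ne_top {α : Type*} [MeasurableSpace α] {μ : Measure α}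
    {g : α → ℝ≥0∞} (hg : AEMeasurable g μ) (hg_ne_zero : ∀ᵐ x ∂μ, g x ≠ 0)
    (hg_fin : ∫⁻ x, g x ∂μ ≠ ∞) : SFinite μ :=
  have : IsFiniteMeasure (μ.withDensity g) := isFiniteMeasure_withDensity hg_fin
  sFinite_of_absolutelyContinuous (withDensity_absolutelyContinuous' hg hg_ne_zero)

theorem one_sub_exp_neg_mul_nonneg {lam s : ℝ} (hlam : 0 ≤ lam) (hs : 0 ≤ s) :
    0 ≤ 1 - Real.exp (-(lam * s)) :=
  sub_nonneg.2 (Real.exp_le_one_iff.2 (neg_nonpos.2 (mul_nonneg hlam hs)))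

theorem one_sub_exp_neg_mul_le {lam s : ℝ} (hlam : 0 ≤ lam) (hs : 0 ≤ s) :
    1 - Real.exp (-(lam * s)) ≤ (1 + lam) * min 1 s := by
  have h_lin : 1 - Real.exp (-(lam * s)) ≤ lam * s := by
    linarith [Real.add_one_le_exp (-(lam * s))]
  have h_one : 1 - Real.exp (-(lam * s)) ≤ 1 := by
    linarith [Real.exp_pos (-(lam * s))]
  rcases le_total s 1 with h | h
  · rw [min_eq_right h]; nlinarith
  · rw [min_eq_left h]; linarith

noncomputable def bernsteinIntegral (ν : Measure ℝ) (lam : ℝ) : ℝ :=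
  ∫ s, (1 - Real.exp (-(lam * s))) ∂ν

section Bernstein

variable {ν : Measure ℝ}

theorem measurable_bernsteinIntegral [SFinite ν] : Measurable (bernsteinIntegral ν) :=
  (Measurable.stronglyMeasurable (by fun_prop :
    Measurable fun p : ℝ × ℝ => 1 - Real.exp (-(p.1 * p.2)))).integral_prod_right'.measurable

variable (hν : ∀ᵐ s ∂ν, 0 ≤ s)
include hν

theorem bernsteinIntegral_nonneg {lam : ℝ} (hlam : 0 ≤ lam) : 0 ≤ bernsteinIntegral ν lam :=
  integral_nonneg_of_ae (hν.mono fun _ hs => one_sub_exp_neg_mul_nonneg hlam hs)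

variable (hmin : Integrable (fun s => min 1 s) ν)
include hmin

theorem integrable_one_sub_exp_neg_mul {lam : ℝ} (hlam : 0 ≤ lam) :
    Integrable (fun s => 1 - Real.exp (-(lam * s))) ν :=
  (hmin.const_mul (1 + lam)).mono' (by fun_prop) <| hν.mono fun s hs => by
    rw [Real.norm_of_nonneg (one_sub_exp_neg_mul_nonneg hlam hs)]
    exact one_sub_exp_neg_mul_le hlam hs

theorem bernsteinIntegral_le {lam : ℝ} (hlam : 0 ≤ lam) :
    bernsteinIntegral ν lam ≤ (1 + lam) * ∫ s, min 1 s ∂ν := by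
  rw [← integral_const_mul]
  exact integral_mono_ae (integrable_one_sub_exp_neg_mul hν hmin hlam) (hmin.const_mul _)
    (hν.mono fun s hs => one_sub_exp_neg_mul_le hlam hs)

variable [SFinite ν] {Ω : Type*} [MeasurableSpace Ω] {ρ : Measure Ω} [IsFiniteMeasure ρ]
  {a : Ω → ℝ}

theorem integrable_bernsteinIntegral_comp (hameas : Measurable a) (ha : ∀ᵐ ω ∂ρ, 0 ≤ a ω)
    (ha_int : Integrable a ρ) : Integrable (fun ω => bernsteinIntegral ν (a ω)) ρ :=
  (((integrable_const 1).add ha_int).mul_const (∫ s, min 1 s ∂ν)).mono'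
    (measurable_bernsteinIntegral.comp hameas).aestronglyMeasurable <| ha.mono fun ω hω => by
      rw [Real.norm_of_nonneg (bernsteinIntegral_nonneg hν hω)]
      exact bernsteinIntegral_le hν hmin hω

theorem integral_bernsteinIntegral_comp (hameas : Measurable a) (ha : ∀ᵐ ω ∂ρ, 0 ≤ a ω)
    (ha_int : Integrable a ρ) :
    ∫ ω, bernsteinIntegral ν (a ω) ∂ρ = ∫ s, ∫ ω, (1 - Real.exp (-(a ω * s))) ∂ρ ∂ν := by
  have h_prod : Integrable (Function.uncurry fun ω s => 1 - Real.exp (-(a ω * s))) (ρ.prod ν) := by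
    rw [integrable_prod_iff (by fun_prop)]
    refine ⟨ha.mono fun ω hω => integrable_one_sub_exp_neg_mul hν hmin hω,
      (integrable_bernsteinIntegral_comp hν hmin hameas ha ha_int).congr
        (ha.mono fun ω hω => integral_congr_ae ?_)⟩
    exact hν.mono fun s hs => (Real.norm_of_nonneg (one_sub_exp_neg_mul_nonneg hω hs)).symm
  exact integral_integral_swap h_prod

end Bernstein

noncomputable def normSqMeasure {Ω : Type*} [MeasurableSpace Ω] (μ : Measure Ω) (f : Ω → ℝ) :
    Measure Ω :=
  μ.withDensity fun ω => ((‖f ω‖₊ ^ 2 : ℝ≥0) : ℝ≥0∞)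

section NormSqMeasure

variable {Ω : Type*} [MeasurableSpace Ω] {μ : Measure Ω} {f : Ω → ℝ}

theorem coe_nnnorm_sq (x : ℝ) : ((‖x‖₊ ^ 2 : ℝ≥0) : ℝ) = x ^ 2 := by
  simp

theorem integral_normSqMeasure (hf : AEStronglyMeasurable f μ) (g : Ω → ℝ) :
    ∫ ω, g ω ∂normSqMeasure μ f = ∫ ω, g ω * f ω ^ 2 ∂μ := by
  rw [normSqMeasure, integral_withDensity_eq_integral_smul₀ (by fun_prop)]
  simp only [NNReal.smul_def, smul_eq_mul, coe_nnnorm_sq, mul_comm]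

theorem integrable_normSqMeasure_iff (hf : AEStronglyMeasurable f μ) {g : Ω → ℝ} :
    Integrable g (normSqMeasure μ f) ↔ Integrable (fun ω => g ω * f ω ^ 2) μ := by
  rw [normSqMeasure, integrable_withDensity_iff_integrable_smul₀ (by fun_prop)]
  simp only [NNReal.smul_def, smul_eq_mul, coe_nnnorm_sq, mul_comm]

theorem isFiniteMeasure_normSqMeasure (hf : MemLp f 2 μ) : IsFiniteMeasure (normSqMeasure μ f) :=
  (integrable_const_iff_isFiniteMeasure one_ne_zero).1 <|
    (integrable_normSqMeasure_iff hf.1).2 (by simpa only [one_mul] using hf.integrable_sq)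

end NormSqMeasure

theorem subordinated_form_representation_general
    (Ω : Type) [MeasurableSpace Ω] (μ : Measure Ω) (a f : Ω → ℝ)
    (hameas : Measurable a) (ha : ∀ ω, 0 ≤ a ω)
    (b : ℝ) (ν : Measure ℝ)
    (hνpos : ∀ᵐ s ∂ν, 0 < s)
    (hνint : ∫⁻ s, ENNReal.ofReal (min 1 s) ∂ν ≠ ⊤)
    (Φ : ℝ → ℝ)
    (hΦ : ∀ lam : ℝ, Φ lam = b * lam + ∫ s, (1 - Real.exp (-(lam * s))) ∂ν)
    (hf : MemLp f 2 μ)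
    (hform : MemLp (fun ω => Real.sqrt (a ω) * f ω) 2 μ) :
    MemLp (fun ω => Real.sqrt (Φ (a ω)) * f ω) 2 μ ∧
    ∫ ω, Φ (a ω) * f ω ^ 2 ∂μ =
      b * ∫ ω, a ω * f ω ^ 2 ∂μ +
        ∫ s, (∫ ω, (f ω - Real.exp (-(s * a ω)) * f ω) * f ω ∂μ) ∂ν := by
  have hΦ' : ∀ lam, Φ lam = b * lam + bernsteinIntegral ν lam := hΦ
  have hν : ∀ᵐ s ∂ν, 0 ≤ s := hνpos.mono fun _ => le_of_lt
  have hmin : Integrable (fun s => min 1 s) ν :=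
    ⟨by fun_prop, (hasFiniteIntegral_iff_ofReal (hν.mono fun _ => le_min zero_le_one)).2
      (lt_top_iff_ne_top.2 hνint)⟩
  have : SFinite ν := sFinite_of_lintegral_ne_top (by fun_prop)
    (hνpos.mono fun s hs => by simp [hs]) hνint
  have := isFiniteMeasure_normSqMeasure hf
  have ha_ae : ∀ᵐ ω ∂normSqMeasure μ f, 0 ≤ a ω := ae_of_all _ ha
  have ha_int : Integrable a (normSqMeasure μ f) :=
    (integrable_normSqMeasure_iff hf.1).2 <| hform.integrable_sq.congr <| ae_of_all _ fun ω => by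
      simp only [mul_pow, Real.sq_sqrt (ha ω)]
  have hG_int := integrable_bernsteinIntegral_comp hν hmin hameas ha_ae ha_int
  have hΦ_int : Integrable (fun ω => Φ (a ω)) (normSqMeasure μ f) := by
    simp only [hΦ']
    exact (ha_int.const_mul b).add hG_int
  refine ⟨?_, ?_⟩
  · have hΦ_meas : Measurable fun ω => Φ (a ω) := by
      simp only [hΦ']
      exact (hameas.const_mul b).add (measurable_bernsteinIntegral.comp hameas)
    refine (memLp_two_iff_integrable_sq (hΦ_meas.sqrt.aestronglyMeasurable.mul hf.1)).2 ?_
    exact ((integrable_normSqMeasure_iff hf.1).1 hΦ_int.pos_part).congr <| ae_of_all _ fun ω => by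
      simp only [Pi.mul_apply, mul_pow, Real.sq_sqrt']
  · calc ∫ ω, Φ (a ω) * f ω ^ 2 ∂μ
        = ∫ ω, b * a ω + bernsteinIntegral ν (a ω) ∂normSqMeasure μ f := by
          simp only [integral_normSqMeasure hf.1, hΦ']
      _ = b * ∫ ω, a ω ∂normSqMeasure μ f + ∫ ω, bernsteinIntegral ν (a ω) ∂normSqMeasure μ f := by
          rw [integral_add (ha_int.const_mul b) hG_int, integral_const_mul]
      _ = _ := by
          rw [integral_bernsteinIntegral_comp hν hmin hameas ha_ae ha_int]
          simp only [integral_normSqMeasure hf.1]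
          congr 2 with s
          congr 1 with ω
          rw [mul_comm s]
          ring

/-- Ōkura's representation of the subordinated form: for a nonnegative self-adjoint
operator `A` (realized spectrally as multiplication by a nonnegative function `a` on
`L²(μ)`) and a Bernstein function `Φ(λ) = bλ + ∫ (1-e^{-λs}) dν(s)`, every `f` in the
form domain of `A` lies in the form domain of `Φ(A)` and
`⟨Φ(A)f, f⟩ = b⟨Af, f⟩ + ∫₀^∞ ⟨f - e^{-sA}f, f⟩ dν(s)`. -/
theorem subordinated_form_representation
    (Ω : Type) [MeasurableSpace Ω] (μ : Measure Ω) (a f : Ω → ℝ)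
    (hameas : Measurable a) (ha : ∀ ω, 0 ≤ a ω)
    (b : ℝ) (hb : 0 ≤ b) (ν : Measure ℝ)
    (hνpos : ∀ᵐ s ∂ν, 0 < s)
    (hνint : ∫⁻ s, ENNReal.ofReal (min 1 s) ∂ν ≠ ⊤)
    (Φ : ℝ → ℝ)
    (hΦ : ∀ lam : ℝ, Φ lam = b * lam + ∫ s, (1 - Real.exp (-(lam * s))) ∂ν)
    (hf : MemLp f 2 μ)
    (hform : MemLp (fun ω => Real.sqrt (a ω) * f ω) 2 μ) :
    MemLp (fun ω => Real.sqrt (Φ (a ω)) * f ω) 2 μ ∧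
    ∫ ω, Φ (a ω) * f ω ^ 2 ∂μ =
      b * ∫ ω, a ω * f ω ^ 2 ∂μ +
        ∫ s, (∫ ω, (f ω - Real.exp (-(s * a ω)) * f ω) * f ω ∂μ) ∂ν :=
  subordinated_form_representation_general Ω μ a f hameas ha b ν hνpos hνint Φ hΦ hf hform
end

section
/- Let A be a nonnegative injective self-adjoint operator on a Hilbert space H and f ∈ H. The following are equivalent: (1) f belongs to the range of √A; (2) there exists C ≥ 0 such that |⟨f, u⟩| ≤ C‖√A u‖ for all u ∈ D(√A); (3) sup_{α>0} ⟨f, (α + A)^{-1} f⟩ < ∞. -/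
/-!
Via the spectral theorem `A` is multiplication by `a ≥ 0` on `L²(μ)`. If `f = √a g` then
`⟨f, u⟩ = ⟨g, √a u⟩` and Cauchy–Schwarz gives the bound with `C = ‖g‖`. Testing that bound
against `u = (α + a)⁻¹ f` gives `I ≤ C √I` for `I = ⟨f, (α + a)⁻¹ f⟩`, since `a u² ≤ f² / (α + a)`;
hence `I ≤ C²`. Finally, letting `α → 0` in the bounded integrals of `f² / (α + a)`, Fatou's
lemma makes `f² / a` integrable, and `g = f / √a` is the required preimage: injectivity of `A`
means `a > 0` a.e., so `f = √a g`.
-/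

open MeasureTheory Filter Topology

namespace MeasureTheory

variable {Ω : Type*} [MeasurableSpace Ω] {μ : Measure Ω}

lemma sqrt_integral_sq_eq_norm_toLp {g : Ω → ℝ} (hg : MemLp g 2 μ) :
    √(∫ ω, g ω ^ 2 ∂μ) = ‖hg.toLp g‖ := by
  have h_inner : inner ℝ (hg.toLp g) (hg.toLp g) = ∫ ω, g ω ^ 2 ∂μ := by
    rw [L2.inner_def]
    refine integral_congr_ae (hg.coeFn_toLp.mono fun ω hω => ?_)
    simp [hω, pow_two]
  rw [← h_inner, real_inner_self_eq_norm_sq, Real.sqrt_sq (norm_nonneg _)]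

lemma abs_integral_mul_le_sqrt_mul_sqrt {g h : Ω → ℝ} (hg : MemLp g 2 μ) (hh : MemLp h 2 μ) :
    |∫ ω, g ω * h ω ∂μ| ≤ √(∫ ω, g ω ^ 2 ∂μ) * √(∫ ω, h ω ^ 2 ∂μ) := by
  have h_inner : inner ℝ (hg.toLp g) (hh.toLp h) = ∫ ω, g ω * h ω ∂μ := by
    rw [L2.inner_def]
    refine integral_congr_ae ((hg.coeFn_toLp.and hh.coeFn_toLp).mono fun ω hω => ?_)
    simp [hω.1, hω.2, mul_comm]
  rw [← h_inner, sqrt_integral_sq_eq_norm_toLp hg, sqrt_integral_sq_eq_norm_toLp hh]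
  exact abs_real_inner_le_norm _ _

lemma integrable_of_tendsto_of_integral_le {F : ℕ → Ω → ℝ} {G : Ω → ℝ} {M : ℝ}
    (hF_int : ∀ n, Integrable (F n) μ) (hF_nonneg : ∀ n, 0 ≤ᵐ[μ] F n)
    (h_lim : ∀ᵐ ω ∂μ, Tendsto (F · ω) atTop (𝓝 (G ω)))
    (h_le : ∀ n, ∫ ω, F n ω ∂μ ≤ M) :
    Integrable G μ := by
  refine ⟨aestronglyMeasurable_of_tendsto_ae _ (fun n => (hF_int n).1) h_lim, ?_⟩
  have h_lintegral (n : ℕ) : ∫⁻ ω, ‖F n ω‖ₑ ∂μ ≤ ENNReal.ofReal M := by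
    rw [lintegral_congr_ae ((hF_nonneg n).mono fun ω hω => Real.enorm_of_nonneg hω),
      ← ofReal_integral_eq_lintegral_ofReal (hF_int n) (hF_nonneg n)]
    exact ENNReal.ofReal_le_ofReal (h_le n)
  calc ∫⁻ ω, ‖G ω‖ₑ ∂μ
      = ∫⁻ ω, liminf (fun n => ‖F n ω‖ₑ) atTop ∂μ :=
        lintegral_congr_ae (h_lim.mono fun ω hω => hω.enorm.liminf_eq.symm)
    _ ≤ liminf (fun n => ∫⁻ ω, ‖F n ω‖ₑ ∂μ) atTop :=
        lintegral_liminf_le' fun n => (hF_int n).1.enorm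
    _ ≤ ENNReal.ofReal M := liminf_le_of_frequently_le' (Frequently.of_forall h_lintegral)
    _ < ⊤ := ENNReal.ofReal_lt_top

end MeasureTheory

section Pointwise

variable {x α : ℝ} (hx : 0 ≤ x) (hα : 0 < α) (y : ℝ)
include hx hα

lemma abs_div_add_le_inv_mul_abs : |y / (α + x)| ≤ α⁻¹ * |y| := by
  rw [abs_div, abs_of_pos (add_pos_of_pos_of_nonneg hα hx), inv_mul_eq_div]
  exact div_le_div_of_nonneg_left (abs_nonneg y) hα (by linarith)

lemma sq_div_add_le_inv_mul_sq : y ^ 2 / (α + x) ≤ α⁻¹ * y ^ 2 := by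
  rw [inv_mul_eq_div]
  exact div_le_div_of_nonneg_left (sq_nonneg y) hα (by linarith)

lemma mul_sq_div_add_le_sq_div_add : x * (y / (α + x)) ^ 2 ≤ y ^ 2 / (α + x) := by
  have hd : 0 < α + x := add_pos_of_pos_of_nonneg hα hx
  rw [div_pow, mul_div_assoc', div_le_div_iff₀ (by positivity) hd, pow_two (α + x)]
  have : x ≤ α + x := by linarith
  nlinarith [mul_le_mul_of_nonneg_left this (mul_nonneg (sq_nonneg y) hd.le)]

end Pointwise

lemma le_sq_of_le_mul_sqrt {I C : ℝ} (hI : 0 ≤ I) (h : I ≤ C * √I) : I ≤ C ^ 2 := by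
  nlinarith [Real.sq_sqrt hI, Real.sqrt_nonneg I]

section RangeSqrt

variable {Ω : Type*} [MeasurableSpace Ω] {μ : Measure Ω} {a f : Ω → ℝ}

def MemRangeSqrt (μ : Measure Ω) (a f : Ω → ℝ) : Prop :=
  ∃ g : Ω → ℝ, MemLp g 2 μ ∧ MemLp (fun ω => √(a ω) * g ω) 2 μ ∧
    f =ᵐ[μ] fun ω => √(a ω) * g ω

def IsSqrtFormBounded (μ : Measure Ω) (a f : Ω → ℝ) : Prop :=
  ∃ C : ℝ, 0 ≤ C ∧ ∀ u : Ω → ℝ, MemLp u 2 μ → MemLp (fun ω => √(a ω) * u ω) 2 μ →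
    |∫ ω, f ω * u ω ∂μ| ≤ C * √(∫ ω, a ω * u ω ^ 2 ∂μ)

def IsResolventFormBounded (μ : Measure Ω) (a f : Ω → ℝ) : Prop :=
  ∃ M : ℝ, ∀ α : ℝ, 0 < α → ∫ ω, f ω ^ 2 / (α + a ω) ∂μ ≤ M

lemma integrable_sq_div_add (ha_meas : AEMeasurable a μ) (ha : ∀ ω, 0 ≤ a ω)
    (hf : MemLp f 2 μ) {α : ℝ} (hα : 0 < α) :
    Integrable (fun ω => f ω ^ 2 / (α + a ω)) μ :=
  (hf.integrable_sq.const_mul α⁻¹).mono'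
    ((hf.1.aemeasurable.pow_const 2).div (ha_meas.const_add α)).aestronglyMeasurable
    (ae_of_all _ fun ω => by
      rw [Real.norm_of_nonneg (div_nonneg (sq_nonneg _) (add_pos_of_pos_of_nonneg hα (ha ω)).le)]
      exact sq_div_add_le_inv_mul_sq (ha ω) hα (f ω))

lemma MemRangeSqrt.isSqrtFormBounded (ha : ∀ ω, 0 ≤ a ω) (h : MemRangeSqrt μ a f) :
    IsSqrtFormBounded μ a f := by
  obtain ⟨g, hg, -, hfg⟩ := h
  refine ⟨√(∫ ω, g ω ^ 2 ∂μ), Real.sqrt_nonneg _, fun u _ hau => ?_⟩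
  have h_pair : ∫ ω, f ω * u ω ∂μ = ∫ ω, g ω * (√(a ω) * u ω) ∂μ :=
    integral_congr_ae (hfg.mono fun ω hω => by simp only [hω]; ring)
  have h_norm : ∫ ω, (√(a ω) * u ω) ^ 2 ∂μ = ∫ ω, a ω * u ω ^ 2 ∂μ := by
    simp only [mul_pow, Real.sq_sqrt (ha _)]
  rw [h_pair, ← h_norm]
  exact abs_integral_mul_le_sqrt_mul_sqrt hg hau

lemma IsSqrtFormBounded.isResolventFormBounded (ha_meas : AEMeasurable a μ)
    (ha : ∀ ω, 0 ≤ a ω) (hf : MemLp f 2 μ) (h : IsSqrtFormBounded μ a f) :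
    IsResolventFormBounded μ a f := by
  obtain ⟨C, hC, h_bound⟩ := h
  refine ⟨C ^ 2, fun α hα => ?_⟩
  have hd (ω : Ω) : 0 < α + a ω := add_pos_of_pos_of_nonneg hα (ha ω)
  set I := ∫ ω, f ω ^ 2 / (α + a ω) ∂μ
  set u : Ω → ℝ := fun ω => f ω / (α + a ω)
  have hI_int : Integrable (fun ω => f ω ^ 2 / (α + a ω)) μ :=
    integrable_sq_div_add ha_meas ha hf hα
  have hu_meas : AEMeasurable u μ := hf.1.aemeasurable.div (ha_meas.const_add α)
  have hu : MemLp u 2 μ :=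
    (hf.const_mul α⁻¹).of_le hu_meas.aestronglyMeasurable (ae_of_all _ fun ω => by
      simpa only [Real.norm_eq_abs, abs_mul, abs_of_pos (inv_pos.2 hα)]
        using abs_div_add_le_inv_mul_abs (ha ω) hα (f ω))
  have hau_le (ω : Ω) : a ω * u ω ^ 2 ≤ f ω ^ 2 / (α + a ω) :=
    mul_sq_div_add_le_sq_div_add (ha ω) hα (f ω)
  have hau_int : Integrable (fun ω => a ω * u ω ^ 2) μ :=
    hI_int.mono' (ha_meas.mul (hu_meas.pow_const 2)).aestronglyMeasurable
      (ae_of_all _ fun ω => by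
        rw [Real.norm_of_nonneg (mul_nonneg (ha ω) (sq_nonneg _))]
        exact hau_le ω)
  have hau : MemLp (fun ω => √(a ω) * u ω) 2 μ := by
    refine (memLp_two_iff_integrable_sq (ha_meas.sqrt.mul hu_meas).aestronglyMeasurable).2
      (hau_int.congr (ae_of_all _ fun ω => ?_))
    simp only [Pi.mul_apply, mul_pow, Real.sq_sqrt (ha ω)]
  have hI_eq : ∫ ω, f ω * u ω ∂μ = I := integral_congr_ae (ae_of_all _ fun ω => by ring)
  have hI_nonneg : 0 ≤ I := integral_nonneg fun ω => div_nonneg (sq_nonneg _) (hd ω).le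
  refine le_sq_of_le_mul_sqrt hI_nonneg ?_
  calc I = |∫ ω, f ω * u ω ∂μ| := by rw [hI_eq, abs_of_nonneg hI_nonneg]
    _ ≤ C * √(∫ ω, a ω * u ω ^ 2 ∂μ) := h_bound u hu hau
    _ ≤ C * √I := by gcongr; exact integral_mono hau_int hI_int hau_le

lemma IsResolventFormBounded.memRangeSqrt (ha_meas : AEMeasurable a μ) (ha : ∀ ω, 0 ≤ a ω)
    (ha_pos : ∀ᵐ ω ∂μ, 0 < a ω) (hf : MemLp f 2 μ) (h : IsResolventFormBounded μ a f) :
    MemRangeSqrt μ a f := by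
  obtain ⟨M, hM⟩ := h
  set c : ℕ → ℝ := fun n => 1 / (n + 1)
  have hc_pos (n : ℕ) : 0 < c n := Nat.one_div_pos_of_nat
  have h_lim : ∀ᵐ ω ∂μ, Tendsto (fun n => f ω ^ 2 / (c n + a ω)) atTop (𝓝 (f ω ^ 2 / a ω)) :=
    ha_pos.mono fun ω hω => tendsto_const_nhds.div
      (by simpa [c] using tendsto_one_div_add_atTop_nhds_zero_nat.add_const (a ω)) hω.ne'
  have h_nonneg (n : ℕ) : 0 ≤ᵐ[μ] fun ω => f ω ^ 2 / (c n + a ω) :=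
    ae_of_all _ fun ω => div_nonneg (sq_nonneg _) (add_pos_of_pos_of_nonneg (hc_pos n) (ha ω)).le
  have h_int : Integrable (fun ω => f ω ^ 2 / a ω) μ :=
    integrable_of_tendsto_of_integral_le (fun n => integrable_sq_div_add ha_meas ha hf (hc_pos n))
      h_nonneg h_lim (fun n => hM _ (hc_pos n))
  set g : Ω → ℝ := fun ω => f ω / √(a ω)
  have hg : MemLp g 2 μ := by
    refine (memLp_two_iff_integrable_sq
      (hf.1.aemeasurable.div ha_meas.sqrt).aestronglyMeasurable).2
      (h_int.congr (ae_of_all _ fun ω => ?_))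
    simp only [Pi.div_apply, div_pow, Real.sq_sqrt (ha ω)]
  have hfg : f =ᵐ[μ] fun ω => √(a ω) * g ω :=
    ha_pos.mono fun ω hω => (mul_div_cancel₀ _ (Real.sqrt_pos.2 hω).ne').symm
  exact ⟨g, hg, hf.ae_eq hfg, hfg⟩

end RangeSqrt

theorem range_sqrt_characterization_general
    (Ω : Type) [MeasurableSpace Ω] (μ : Measure Ω) (a f : Ω → ℝ)
    (hameas : Measurable a) (ha : ∀ ω, 0 ≤ a ω)
    (hinj : ∀ᵐ ω ∂μ, 0 < a ω)
    (hf : MemLp f 2 μ) :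
    ((∃ g : Ω → ℝ, MemLp g 2 μ ∧ MemLp (fun ω => Real.sqrt (a ω) * g ω) 2 μ ∧
        f =ᵐ[μ] fun ω => Real.sqrt (a ω) * g ω) ↔
      (∃ C : ℝ, 0 ≤ C ∧ ∀ u : Ω → ℝ, MemLp u 2 μ →
        MemLp (fun ω => Real.sqrt (a ω) * u ω) 2 μ →
        |∫ ω, f ω * u ω ∂μ| ≤ C * Real.sqrt (∫ ω, a ω * u ω ^ 2 ∂μ))) ∧
    ((∃ g : Ω → ℝ, MemLp g 2 μ ∧ MemLp (fun ω => Real.sqrt (a ω) * g ω) 2 μ ∧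
        f =ᵐ[μ] fun ω => Real.sqrt (a ω) * g ω) ↔
      (∃ M : ℝ, ∀ α : ℝ, 0 < α → ∫ ω, f ω ^ 2 / (α + a ω) ∂μ ≤ M)) := by
  have h12 : MemRangeSqrt μ a f → IsSqrtFormBounded μ a f :=
    MemRangeSqrt.isSqrtFormBounded ha
  have h23 : IsSqrtFormBounded μ a f → IsResolventFormBounded μ a f :=
    IsSqrtFormBounded.isResolventFormBounded hameas.aemeasurable ha hf
  have h31 : IsResolventFormBounded μ a f → MemRangeSqrt μ a f :=
    IsResolventFormBounded.memRangeSqrt hameas.aemeasurable ha hinj hf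
  exact ⟨⟨h12, h31 ∘ h23⟩, ⟨h23 ∘ h12, h31⟩⟩

/-- Characterization of the range of `√A` for a nonnegative injective self-adjoint
operator `A` (realized spectrally as multiplication by a measurable function `a ≥ 0`
with `a > 0` a.e. on `L²(μ)`): for `f ∈ L²`,
(1) `f ∈ Range(√A)` iff (2) `|⟨f,u⟩| ≤ C‖√A u‖` for all `u ∈ D(√A)` and some `C`,
iff (3) `sup_{α>0} ⟨f, (α+A)⁻¹ f⟩ < ∞`. -/
theorem range_sqrt_characterization
    (Ω : Type) [MeasurableSpace Ω] (μ : Measure Ω) (a f : Ω → ℝ)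
    (hameas : Measurable a) (ha : ∀ ω, 0 ≤ a ω)
    (hinj : ∀ᵐ ω ∂μ, 0 < a ω)
    (hfmeas : Measurable f) (hf : MemLp f 2 μ) :
    ((∃ g : Ω → ℝ, MemLp g 2 μ ∧ MemLp (fun ω => Real.sqrt (a ω) * g ω) 2 μ ∧
        f =ᵐ[μ] fun ω => Real.sqrt (a ω) * g ω) ↔
      (∃ C : ℝ, 0 ≤ C ∧ ∀ u : Ω → ℝ, MemLp u 2 μ →
        MemLp (fun ω => Real.sqrt (a ω) * u ω) 2 μ →
        |∫ ω, f ω * u ω ∂μ| ≤ C * Real.sqrt (∫ ω, a ω * u ω ^ 2 ∂μ))) ∧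
    ((∃ g : Ω → ℝ, MemLp g 2 μ ∧ MemLp (fun ω => Real.sqrt (a ω) * g ω) 2 μ ∧
        f =ᵐ[μ] fun ω => Real.sqrt (a ω) * g ω) ↔
      (∃ M : ℝ, ∀ α : ℝ, 0 < α → ∫ ω, f ω ^ 2 / (α + a ω) ∂μ ≤ M)) :=
  range_sqrt_characterization_general Ω μ a f hameas ha hinj hf
end

section
/- Let A be a nonnegative self-adjoint operator on a Hilbert space H whose associated semigroup e^{-tA} is positivity-preserving on H = L²(E;m), and let G_α = (α+A)^{-1}. Suppose g ∈ L²(E;m) is nonnegative with g ≠ 0. Then the set B = {x ∈ E : G₁g(x) = 0} satisfies: G₁(1_B f) = 0 m-a.e. on B^c for every f ∈ L²(E;m), i.e., 1_{B^c} G₁(1_B f) = 0. -/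
/-!
On `B = {G₁g = 0}` the nonnegative integral `G₁g = ∫ e^{-t} T_t g dt` vanishes, so `T_t g = 0`
there for a.e. `t > 0`, hence `T_s G₁g = ∫ e^{-t} T_{s+t} g dt = 0` and `G₁G₁g = 0` on `B`.
For `u ≥ 0`, symmetry gives `∫ G₁(1_B u) · G₁g = ∫ 1_B u · G₁G₁g = 0`, and the integrand is
nonnegative, so `G₁(1_B u) = 0` wherever `G₁g ≠ 0`. A general `f` is split as `f⁺ - f⁻`;
symmetry alone makes `G₁` additive a.e.
-/

open MeasureTheory Set Filter

theorem ae_restrict_Ioi_comp_add {p : ℝ → Prop} (h : ∀ᵐ t ∂volume.restrict (Ioi 0), p t)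
    {s : ℝ} (hs : 0 ≤ s) : ∀ᵐ t ∂volume.restrict (Ioi 0), p (s + t) := by
  rw [ae_restrict_iff' measurableSet_Ioi] at h ⊢
  filter_upwards [(measurePreserving_add_left volume s).quasiMeasurePreserving.ae h]
    with t ht ht0
  exact ht (show 0 < s + t by linarith [mem_Ioi.mp ht0])

section Symmetric

variable {Ω : Type*} [MeasurableSpace Ω] {m : Measure Ω} {G : (Ω → ℝ) → Ω → ℝ}

/-- `G` is not assumed linear: symmetry alone gives `∫ h² = ∫ ((u - v) - u + v) · G h = 0`
for `h = G (u - v) - G u + G v`. -/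
theorem apply_sub_ae_eq_of_symmetric
    (hsym : ∀ u v : Ω → ℝ, MemLp u 2 m → MemLp v 2 m →
      ∫ ω, G u ω * v ω ∂m = ∫ ω, u ω * G v ω ∂m)
    (hL2 : ∀ u : Ω → ℝ, MemLp u 2 m → MemLp (G u) 2 m)
    {u v : Ω → ℝ} (hu : MemLp u 2 m) (hv : MemLp v 2 m) :
    G (u - v) =ᵐ[m] G u - G v := by
  set h := G (u - v) - G u + G v with hh_def
  have huv := hu.sub hv
  have hh : MemLp h 2 m := ((hL2 _ huv).sub (hL2 _ hu)).add (hL2 _ hv)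
  have hGh := hL2 _ hh
  have hmul {a b : Ω → ℝ} (ha : MemLp a 2 m) (hb : MemLp b 2 m) :
      Integrable (fun ω => a ω * b ω) m :=
    ha.integrable_mul hb
  have hsq : ∫ ω, h ω * h ω ∂m = 0 := by
    calc ∫ ω, h ω * h ω ∂m
        = ∫ ω, G (u - v) ω * h ω - G u ω * h ω + G v ω * h ω ∂m := by
          congr with ω
          simp only [hh_def, Pi.add_apply, Pi.sub_apply]
          ring
      _ = ∫ ω, G (u - v) ω * h ω ∂m - ∫ ω, G u ω * h ω ∂m + ∫ ω, G v ω * h ω ∂m := by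
          rw [integral_add _ (hmul (hL2 _ hv) hh),
            integral_sub (hmul (hL2 _ huv) hh) (hmul (hL2 _ hu) hh)]
          exact (hmul (hL2 _ huv) hh).sub (hmul (hL2 _ hu) hh)
      _ = ∫ ω, (u - v) ω * G h ω ∂m - ∫ ω, u ω * G h ω ∂m + ∫ ω, v ω * G h ω ∂m := by
          rw [hsym _ _ huv hh, hsym _ _ hu hh, hsym _ _ hv hh]
      _ = ∫ ω, (u - v) ω * G h ω - u ω * G h ω + v ω * G h ω ∂m := by
          rw [integral_add _ (hmul hv hGh), integral_sub (hmul huv hGh) (hmul hu hGh)]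
          exact (hmul huv hGh).sub (hmul hu hGh)
      _ = 0 := integral_eq_zero_of_ae (ae_of_all _ fun ω => by
          simp only [Pi.sub_apply, Pi.zero_apply]
          ring)
  have hh0 := (integral_eq_zero_iff_of_nonneg (fun ω => mul_self_nonneg (h ω))
    (hmul hh hh)).mp hsq
  filter_upwards [hh0] with ω hω
  have : h ω = 0 := mul_self_eq_zero.mp hω
  simp only [hh_def, Pi.add_apply, Pi.sub_apply] at this ⊢
  linarith

theorem ae_apply_indicator_eq_zero_of_nonneg
    (hsym : ∀ u v : Ω → ℝ, MemLp u 2 m → MemLp v 2 m →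
      ∫ ω, G u ω * v ω ∂m = ∫ ω, u ω * G v ω ∂m)
    (hL2 : ∀ u : Ω → ℝ, MemLp u 2 m → MemLp (G u) 2 m)
    (hpos : ∀ u : Ω → ℝ, (∀ ω, 0 ≤ u ω) → ∀ ω, 0 ≤ G u ω)
    {g : Ω → ℝ} (hg : MemLp g 2 m) (hg_nonneg : ∀ ω, 0 ≤ g ω)
    (hGGg : ∀ ω, G g ω = 0 → G (G g) ω = 0) (hB : MeasurableSet {x | G g x = 0})
    {u : Ω → ℝ} (hu : MemLp u 2 m) (hu_nonneg : ∀ ω, 0 ≤ u ω) :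
    ∀ᵐ ω ∂m, G g ω ≠ 0 → G ({x | G g x = 0}.indicator u) ω = 0 := by
  set B := {x | G g x = 0}
  have hBu : MemLp (B.indicator u) 2 m := hu.indicator hB
  have hBu_nonneg : ∀ ω, 0 ≤ B.indicator u ω := indicator_nonneg fun ω _ => hu_nonneg ω
  have hzero : ∫ ω, G (B.indicator u) ω * G g ω ∂m = 0 := by
    rw [hsym _ _ hBu (hL2 _ hg)]
    refine integral_eq_zero_of_ae (ae_of_all _ fun ω => ?_)
    by_cases hω : ω ∈ B
    · simp [hGGg ω hω]
    · simp [indicator_of_notMem hω]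
  have hprod := (integral_eq_zero_iff_of_nonneg
    (fun ω => mul_nonneg (hpos _ hBu_nonneg ω) (hpos _ hg_nonneg ω))
    ((hL2 _ hBu).integrable_mul (hL2 _ hg))).mp hzero
  filter_upwards [hprod] with ω hω hne
  exact (mul_eq_zero.mp hω).resolve_right hne

end Symmetric

section Resolvent

variable {Ω : Type*} {T : ℝ → (Ω → ℝ) → Ω → ℝ} {G : (Ω → ℝ) → Ω → ℝ}

theorem measurable_resolvent [MeasurableSpace Ω]
    (hG : ∀ u : Ω → ℝ, G u = fun ω => ∫ t in Ioi (0:ℝ), Real.exp (-t) * T t u ω)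
    {u : Ω → ℝ} (hu : Measurable (Function.uncurry fun t ω => T t u ω)) :
    Measurable (G u) := by
  rw [hG]
  exact ((measurable_fst.neg.exp).mul hu).stronglyMeasurable.integral_prod_left'.measurable

theorem resolvent_nonneg
    (hG : ∀ u : Ω → ℝ, G u = fun ω => ∫ t in Ioi (0:ℝ), Real.exp (-t) * T t u ω)
    (hpos : ∀ t : ℝ, 0 ≤ t → ∀ u : Ω → ℝ, (∀ ω, 0 ≤ u ω) → ∀ ω, 0 ≤ T t u ω)
    {u : Ω → ℝ} (hu : ∀ ω, 0 ≤ u ω) (ω : Ω) : 0 ≤ G u ω := by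
  rw [hG]
  exact setIntegral_nonneg measurableSet_Ioi fun t ht =>
    mul_nonneg (Real.exp_nonneg _) (hpos t (le_of_lt ht) u hu ω)

theorem ae_semigroup_eq_zero_of_resolvent_eq_zero
    (hG : ∀ u : Ω → ℝ, G u = fun ω => ∫ t in Ioi (0:ℝ), Real.exp (-t) * T t u ω)
    (hpos : ∀ t : ℝ, 0 ≤ t → ∀ u : Ω → ℝ, (∀ ω, 0 ≤ u ω) → ∀ ω, 0 ≤ T t u ω)
    {u : Ω → ℝ} (hu : ∀ ω, 0 ≤ u ω) {ω : Ω}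
    (hint : IntegrableOn (fun t => Real.exp (-t) * T t u ω) (Ioi 0)) (hω : G u ω = 0) :
    ∀ᵐ t ∂volume.restrict (Ioi 0), T t u ω = 0 := by
  have hnn : 0 ≤ᵐ[volume.restrict (Ioi 0)] fun t => Real.exp (-t) * T t u ω :=
    (ae_restrict_iff' measurableSet_Ioi).2 <| ae_of_all _ fun t ht =>
      mul_nonneg (Real.exp_nonneg _) (hpos t (le_of_lt ht) u hu ω)
  rw [hG] at hω
  filter_upwards [(integral_eq_zero_iff_of_nonneg_ae hnn hint).mp hω] with t ht
  exact (mul_eq_zero.mp ht).resolve_left (Real.exp_pos _).ne'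

theorem resolvent_resolvent_eq_zero_of_resolvent_eq_zero
    (hG : ∀ u : Ω → ℝ, G u = fun ω => ∫ t in Ioi (0:ℝ), Real.exp (-t) * T t u ω)
    (hpos : ∀ t : ℝ, 0 ≤ t → ∀ u : Ω → ℝ, (∀ ω, 0 ≤ u ω) → ∀ ω, 0 ≤ T t u ω)
    {u : Ω → ℝ} (hshift : ∀ s : ℝ, 0 ≤ s →
      T s (G u) = fun ω => ∫ t in Ioi (0:ℝ), Real.exp (-t) * T (s + t) u ω)
    (hu : ∀ ω, 0 ≤ u ω) {ω : Ω}
    (hint : IntegrableOn (fun t => Real.exp (-t) * T t u ω) (Ioi 0)) (hω : G u ω = 0) :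
    G (G u) ω = 0 := by
  have hT := ae_semigroup_eq_zero_of_resolvent_eq_zero hG hpos hu hint hω
  rw [hG]
  refine setIntegral_eq_zero_of_forall_eq_zero fun s hs => ?_
  have hs : 0 ≤ s := le_of_lt hs
  suffices T s (G u) ω = 0 by simp [this]
  rw [hshift s hs]
  refine integral_eq_zero_of_ae ?_
  filter_upwards [ae_restrict_Ioi_comp_add hT hs] with t ht
  simp [ht]

end Resolvent

theorem resolvent_invariant_set_general
    (Ω : Type) [MeasurableSpace Ω] (m : Measure Ω)
    (T : ℝ → (Ω → ℝ) → Ω → ℝ)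
    (G1 : (Ω → ℝ) → Ω → ℝ)
    (hG1 : ∀ u : Ω → ℝ, G1 u = fun ω => ∫ t in Set.Ioi (0:ℝ), Real.exp (-t) * T t u ω)
    (hmeas : ∀ u : Ω → ℝ, Measurable u →
      Measurable (Function.uncurry fun t ω => T t u ω))
    (hpos : ∀ t : ℝ, 0 ≤ t → ∀ u : Ω → ℝ, (∀ ω, 0 ≤ u ω) → ∀ ω, 0 ≤ T t u ω)
    (hintg : ∀ u : Ω → ℝ, Measurable u → MemLp u 2 m → ∀ ω,
      IntegrableOn (fun t => Real.exp (-t) * T t u ω) (Set.Ioi 0))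
    (hshift : ∀ s : ℝ, 0 ≤ s → ∀ u : Ω → ℝ,
      T s (G1 u) = fun ω => ∫ t in Set.Ioi (0:ℝ), Real.exp (-t) * T (s + t) u ω)
    (hGsym : ∀ u v : Ω → ℝ, MemLp u 2 m → MemLp v 2 m →
      ∫ ω, G1 u ω * v ω ∂m = ∫ ω, u ω * G1 v ω ∂m)
    (hGcontr : ∀ u : Ω → ℝ, MemLp u 2 m → MemLp (G1 u) 2 m)
    (g : Ω → ℝ) (hgmeas : Measurable g) (hgL2 : MemLp g 2 m)
    (hgpos : ∀ ω, 0 ≤ g ω) :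
    ∀ f : Ω → ℝ, Measurable f → MemLp f 2 m →
      ∀ᵐ ω ∂m, G1 g ω ≠ 0 → G1 (Set.indicator {x | G1 g x = 0} f) ω = 0 := by
  intro f _ hf
  set B := {x | G1 g x = 0}
  have hB : MeasurableSet B :=
    measurable_resolvent hG1 (hmeas g hgmeas) (measurableSet_singleton 0)
  have hGGg (ω : Ω) (hω : G1 g ω = 0) : G1 (G1 g) ω = 0 :=
    resolvent_resolvent_eq_zero_of_resolvent_eq_zero hG1 hpos (fun s hs => hshift s hs g) hgpos
      (hintg g hgmeas hgL2 ω) hω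
  have hvanish {u : Ω → ℝ} (hu : MemLp u 2 m) (hu_nonneg : ∀ ω, 0 ≤ u ω) :=
    ae_apply_indicator_eq_zero_of_nonneg hGsym hGcontr
      (fun _ hv => resolvent_nonneg hG1 hpos hv) hgL2 hgpos hGGg hB hu hu_nonneg
  have hsplit : B.indicator f =
      B.indicator (fun ω => max (f ω) 0) - B.indicator (fun ω => max (-f ω) 0) := by
    rw [← indicator_sub']
    congr with ω
    exact (max_zero_sub_max_neg_zero_eq_self (f ω)).symm
  filter_upwards [hvanish hf.pos_part (fun _ => le_max_right _ _),
    hvanish hf.neg_part (fun _ => le_max_right _ _),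
    apply_sub_ae_eq_of_symmetric hGsym hGcontr (hf.pos_part.indicator hB)
      (hf.neg_part.indicator hB)]
    with ω hplus hminus hsub hω
  rw [hsplit, hsub, Pi.sub_apply, hplus hω, hminus hω, sub_zero]

/-- Invariant-set argument: let `T_t` be the positivity-preserving symmetric semigroup
of a nonnegative self-adjoint operator on `L²(m)` and `G₁u = ∫₀^∞ e^{-t} T_t u dt` its
`1`-resolvent. If `g ∈ L²(m)` is nonnegative and nonzero, then for
`B = {x : G₁g(x) = 0}` one has `1_{B^c} · G₁(1_B f) = 0` a.e. for every `f ∈ L²(m)`. -/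
theorem resolvent_invariant_set
    (Ω : Type) [MeasurableSpace Ω] (m : Measure Ω) [SigmaFinite m]
    (T : ℝ → (Ω → ℝ) → Ω → ℝ)
    (G1 : (Ω → ℝ) → Ω → ℝ)
    (hG1 : ∀ u : Ω → ℝ, G1 u = fun ω => ∫ t in Set.Ioi (0:ℝ), Real.exp (-t) * T t u ω)
    (hmeas : ∀ u : Ω → ℝ, Measurable u →
      Measurable (Function.uncurry fun t ω => T t u ω))
    (hpos : ∀ t : ℝ, 0 ≤ t → ∀ u : Ω → ℝ, (∀ ω, 0 ≤ u ω) → ∀ ω, 0 ≤ T t u ω)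
    (hintg : ∀ u : Ω → ℝ, Measurable u → MemLp u 2 m → ∀ ω,
      IntegrableOn (fun t => Real.exp (-t) * T t u ω) (Set.Ioi 0))
    (hshift : ∀ s : ℝ, 0 ≤ s → ∀ u : Ω → ℝ,
      T s (G1 u) = fun ω => ∫ t in Set.Ioi (0:ℝ), Real.exp (-t) * T (s + t) u ω)
    (hGsym : ∀ u v : Ω → ℝ, MemLp u 2 m → MemLp v 2 m →
      ∫ ω, G1 u ω * v ω ∂m = ∫ ω, u ω * G1 v ω ∂m)
    (hGcontr : ∀ u : Ω → ℝ, MemLp u 2 m → MemLp (G1 u) 2 m)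
    (g : Ω → ℝ) (hgmeas : Measurable g) (hgL2 : MemLp g 2 m)
    (hgpos : ∀ ω, 0 ≤ g ω) (hgne : ¬ g =ᵐ[m] 0) :
    ∀ f : Ω → ℝ, Measurable f → MemLp f 2 m →
      ∀ᵐ ω ∂m, G1 g ω ≠ 0 → G1 (Set.indicator {x | G1 g x = 0} f) ω = 0 :=
  resolvent_invariant_set_general Ω m T G1 hG1 hmeas hpos hintg hshift hGsym hGcontr g hgmeas hgL2
    hgpos
end
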